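/- The polynomial α_3(s) = (15/8)s³ − (25/8)s² + (13/8)s − 3/8 factors as α_3(s) = (1/8)(s − 1)(15s² − 10s + 3), and every complex root z of 15s² − 10s + 3 satisfies |z|² = 1/5, hence |z| < 1. Consequently, 1 is a simple root of α_3 and all other roots lie strictly inside the unit circle, so the 3-step LIL method satisfies the Dahlquist root condition (zero-stability). -/

import Mathlib

/-!
`α₃` factors as `(1/8)(s − 1)(15s² − 10s + 3)`. The quadratic factor has negative discriminant,
so its roots are non-real, and for non-real roots of `a s² + b s + c` (real coefficients) the
imaginary part of the equation pins `Re z = -b/(2a)`, after which the real part reads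
`a |z|² = c`; here `|z|² = 3/15 = 1/5 < 1`. The quadratic does not vanish at `1`, so `1` is a
simple root.
-/

open Polynomial

/-- First characteristic polynomial of the 3-step LIL method, over `ℂ`. -/
noncomputable def lilAlpha3 : Polynomial ℂ :=
  C (15 / 8) * X ^ 3 - C (25 / 8) * X ^ 2 + C (13 / 8) * X - C (3 / 8)

theorem Complex.normSq_eq_of_quadratic_eq_zero {a b c : ℝ} (hdisc : b ^ 2 < 4 * a * c) {z : ℂ}
    (hz : a * z ^ 2 + b * z + c = 0) : a * Complex.normSq z = c := by
  have hre := congrArg Complex.re hz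
  have him := congrArg Complex.im hz
  simp only [pow_two, Complex.add_re, Complex.add_im, Complex.mul_re, Complex.mul_im,
    Complex.ofReal_re, Complex.ofReal_im, Complex.zero_re, Complex.zero_im, zero_mul,
    sub_zero, add_zero] at hre him
  have hvertex : 2 * a * z.re + b = 0 := by
    have hfactor : z.im * (2 * a * z.re + b) = 0 := by linarith
    refine (mul_eq_zero.mp hfactor).resolve_left fun hy => ?_
    have hsq : (2 * a * z.re + b) ^ 2 = b ^ 2 - 4 * a * c := by
      rw [hy] at hre
      linear_combination (4 * a) * hre
    linarith [sq_nonneg (2 * a * z.re + b)]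
  rw [Complex.normSq_apply]
  linear_combination z.re * hvertex - hre

theorem norm_sq_eq_of_lil_quadratic_eq_zero {z : ℂ} (hz : 15 * z ^ 2 - 10 * z + 3 = 0) :
    ‖z‖ ^ 2 = 1 / 5 := by
  have h := Complex.normSq_eq_of_quadratic_eq_zero (a := 15) (b := -10) (c := 3) (by norm_num)
    (z := z) (by push_cast; linear_combination hz)
  rw [Complex.sq_norm]
  linarith

theorem norm_lt_one_of_lil_quadratic_eq_zero {z : ℂ} (hz : 15 * z ^ 2 - 10 * z + 3 = 0) :
    ‖z‖ < 1 :=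
  (sq_lt_one_iff₀ (norm_nonneg z)).mp (by rw [norm_sq_eq_of_lil_quadratic_eq_zero hz]; norm_num)

theorem rootMultiplicity_mul_X_sub_C_of_not_isRoot {R : Type*} [CommRing R] {p : R[X]} {a : R}
    (hp : ¬p.IsRoot a) : (p * (X - C a)).rootMultiplicity a = 1 := by
  have hp0 : p ≠ 0 := fun h => hp (by simp [h])
  simpa [rootMultiplicity_eq_zero hp] using rootMultiplicity_mul_X_sub_C_pow (a := a) (n := 1) hp0

theorem lilAlpha3_eq :
    lilAlpha3 = C (1 / 8) * (X - C 1) * (C 15 * X ^ 2 - C 10 * X + C 3) := by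
  apply Polynomial.funext
  intro x
  simp only [lilAlpha3, eval_mul, eval_sub, eval_add, eval_pow, eval_C, eval_X]
  ring

/-- `α₃(s)` factors as `(1/8)(s − 1)(15s² − 10s + 3)`, every complex root `z` of
`15s² − 10s + 3` satisfies `|z|² = 1/5` (hence `|z| < 1`), `1` is a simple root of
`α₃`, and all other roots lie strictly inside the unit circle: the 3-step LIL
method satisfies the Dahlquist root condition (zero-stability). -/
theorem lil_root_condition_m3 :
    lilAlpha3 = C (1 / 8) * (X - C 1) * (C 15 * X ^ 2 - C 10 * X + C 3) ∧
    (∀ z : ℂ, 15 * z ^ 2 - 10 * z + 3 = 0 →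
      ‖z‖ ^ 2 = 1 / 5 ∧ ‖z‖ < 1) ∧
    lilAlpha3.rootMultiplicity 1 = 1 ∧
    (∀ z : ℂ, lilAlpha3.eval z = 0 → z ≠ 1 → ‖z‖ < 1) := by
  refine ⟨lilAlpha3_eq,
    fun _ hz => ⟨norm_sq_eq_of_lil_quadratic_eq_zero hz, norm_lt_one_of_lil_quadratic_eq_zero hz⟩,
    ?_, fun z hz hz1 => norm_lt_one_of_lil_quadratic_eq_zero ?_⟩
  · have hsplit : lilAlpha3 = C (1 / 8) * (C 15 * X ^ 2 - C 10 * X + C 3) * (X - C 1) := by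
      rw [lilAlpha3_eq]; ring
    rw [hsplit]
    exact rootMultiplicity_mul_X_sub_C_of_not_isRoot (by norm_num [IsRoot])
  · rw [lilAlpha3_eq] at hz
    simp only [eval_mul, eval_sub, eval_add, eval_pow, eval_C, eval_X] at hz
    simpa [sub_ne_zero.mpr hz1] using hz
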